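/- Let ψ : {0,1}ⁿ → ℝ be a pseudo-Boolean function. For every x ∈ ℝⁿ, L_ψ(x) = ψ(0) + L_ψ(x⁺) − L_{ψ^d}(x⁻), where ψ^d is the dual of ψ. -/

import Mathlib

open Finset

/-- The indicator tuple `1_A` of a subset `A ⊆ [n]`. -/
def ind {n : ℕ} (A : Finset (Fin n)) : Fin n → ℝ := fun i => if i ∈ A then 1 else 0

/-- The Möbius transform of a pseudo-Boolean function (viewed as a set function). -/
def mobius {n : ℕ} (ψ : Finset (Fin n) → ℝ) (A : Finset (Fin n)) : ℝ :=
  ∑ B ∈ A.powerset, (-1 : ℝ) ^ (A.card - B.card) * ψ B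

/-- `min_{i ∈ A} x i` (with value `0` for `A = ∅`). -/
def minOnPB {n : ℕ} (A : Finset (Fin n)) (x : Fin n → ℝ) : ℝ :=
  if h : A.Nonempty then A.inf' h x else 0

/-- The Lovász extension of a pseudo-Boolean function `ψ` (viewed as a set function):
`L_ψ(x) = a_ψ(∅) + Σ_{∅ ≠ A ⊆ [n]} a_ψ(A) · min_{i ∈ A} x_i`. -/
def Lov {n : ℕ} (ψ : Finset (Fin n) → ℝ) (x : Fin n → ℝ) : ℝ :=
  mobius ψ ∅ + ∑ A : Finset (Fin n), mobius ψ A * minOnPB A x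

/-- `x ∈ ℝⁿ_σ`, i.e. `x_{σ(1)} ≤ ⋯ ≤ x_{σ(n)}`. -/
def inRσ {n : ℕ} (σ : Equiv.Perm (Fin n)) (x : Fin n → ℝ) : Prop :=
  ∀ i j : Fin n, i ≤ j → x (σ i) ≤ x (σ j)

/-- `A_σ^↑(k) = {σ(j) : j ≥ k}` (0-indexed; `Aup σ n = ∅`). -/
def Aup {n : ℕ} (σ : Equiv.Perm (Fin n)) (k : ℕ) : Finset (Fin n) :=
  (Finset.univ.filter fun j : Fin n => k ≤ (j : ℕ)).image σ

/-- `A_σ^↓(k) = {σ(j) : j < k}` (0-indexed; `Adown σ 0 = ∅`). -/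
def Adown {n : ℕ} (σ : Equiv.Perm (Fin n)) (k : ℕ) : Finset (Fin n) :=
  (Finset.univ.filter fun j : Fin n => (j : ℕ) < k).image σ

/-- The dual `ψ^d` of a pseudo-Boolean function `ψ` (as a set function):
`ψ^d(1_A) = ψ(0) + ψ(1) − ψ(1 − 1_A)`. -/
def dualPB {n : ℕ} (ψ : Finset (Fin n) → ℝ) : Finset (Fin n) → ℝ :=
  fun A => ψ ∅ + ψ Finset.univ - ψ Aᶜ

/-!
Write `L_ψ(x) = ψ(∅) + Σ_A a_ψ(A) · min_A x`. For `B ≠ ∅` the Möbius transform of the dual is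
`a_{ψ^d}(B) = -a_{ψ ∘ compl}(B) = -(-1)^|B| Σ_{A ⊇ B} a_ψ(A)`; together with the max–min
inclusion–exclusion `min_A (-y) = Σ_{B ⊆ A} (-1)^|B| min_B y` this gives
`L_{ψ^d}(y) = 2ψ(∅) - L_ψ(-y)`. Since `t ↦ max t 0` and `t ↦ min t 0` are monotone, they commute
with every `min_A`, and they add up to the identity, so `L_ψ(x⁺) + L_ψ(-x⁻) = ψ(∅) + L_ψ(x)`.
-/

section Signs

variable {α : Type*} [Fintype α] [DecidableEq α]

lemma neg_one_pow_sub_of_le {R : Type*} [DivisionRing R] {a b : ℕ} (h : b ≤ a) :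
    (-1 : R) ^ (a - b) = (-1) ^ a * (-1) ^ b := by
  rw [pow_sub₀ _ (by norm_num) h, ← inv_pow, inv_neg_one]

lemma neg_one_pow_card_compl (E : Finset α) :
    (-1 : ℝ) ^ Eᶜ.card = (-1) ^ Fintype.card α * (-1) ^ E.card := by
  rw [card_compl, neg_one_pow_sub_of_le (card_le_univ E)]

lemma sum_superset_eq_sum_powerset_compl {M : Type*} [AddCommMonoid M] (D : Finset α)
    (f : Finset α → M) : ∑ S ∈ univ.filter (D ⊆ ·), f S = ∑ T ∈ Dᶜ.powerset, f Tᶜ :=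
  sum_nbij' compl compl (by simp) (by simp [subset_compl_comm]) (fun _ _ => compl_compl _)
    (fun _ _ => compl_compl _) (fun _ _ => by rw [compl_compl])

lemma sum_superset_neg_one_pow_card (D : Finset α) :
    ∑ S ∈ univ.filter (D ⊆ ·), (-1 : ℝ) ^ S.card =
      if D = univ then (-1) ^ Fintype.card α else 0 := by
  have h := sum_powerset_neg_one_pow_card (x := Dᶜ)
  simp only [sum_superset_eq_sum_powerset_compl, neg_one_pow_card_compl, ← mul_sum,
    compl_eq_empty_iff] at h ⊢
  have hR : ∑ S ∈ Dᶜ.powerset, (-1 : ℝ) ^ S.card = if D = univ then 1 else 0 := by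
    exact_mod_cast h
  rw [hR, mul_ite, mul_one, mul_zero]

lemma union_eq_univ_iff_compl_subset {B C : Finset α} : B ∪ C = univ ↔ Bᶜ ⊆ C :=
  codisjoint_iff.symm.trans codisjoint_iff_compl_le_right

end Signs

section

variable {n : ℕ}

lemma minOnPB_empty (x : Fin n → ℝ) : minOnPB ∅ x = 0 := dif_neg Finset.not_nonempty_empty

lemma minOnPB_comp_of_monotone {g : ℝ → ℝ} (hg : Monotone g) (hg0 : g 0 = 0)
    (A : Finset (Fin n)) (x : Fin n → ℝ) : minOnPB A (fun i => g (x i)) = g (minOnPB A x) := by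
  unfold minOnPB
  split_ifs with hA
  · exact (apply_inf'_eq_inf'_comp hA g fun a b => hg.map_min).symm
  · exact hg0.symm

lemma minOnPB_insert_of_le {B : Finset (Fin n)} (hB : B.Nonempty) {y : Fin n → ℝ} {j : Fin n}
    (hj : ∀ i ∈ B, y i ≤ y j) : minOnPB (insert j B) y = minOnPB B y := by
  rw [minOnPB, minOnPB, dif_pos (insert_nonempty j B), dif_pos hB, inf'_insert (H := hB)]
  obtain ⟨i, hi⟩ := hB
  exact min_eq_right ((inf'_le y hi).trans (hj i hi))

theorem sum_powerset_neg_one_pow_mul_minOnPB (A : Finset (Fin n)) (y : Fin n → ℝ) :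
    ∑ B ∈ A.powerset, (-1 : ℝ) ^ B.card * minOnPB B y = minOnPB A (-y) := by
  rcases A.eq_empty_or_nonempty with rfl | hA
  · simp [minOnPB_empty]
  -- For `j` maximising `y` on `A` and nonempty `B ⊆ A \ {j}`, the terms of `B` and `insert j B`
  -- cancel, leaving only the term of `{j}`.
  obtain ⟨j, hjA, hj⟩ := A.exists_max_image y hA
  have hmin : minOnPB A (-y) = -y j := by
    rw [minOnPB, dif_pos hA]
    exact le_antisymm (inf'_le _ hjA) (le_inf' _ _ fun i hi => neg_le_neg (hj i hi))
  rw [hmin, ← insert_erase hjA, sum_powerset_insert (notMem_erase j A), ← sum_add_distrib,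
    sum_eq_single ∅]
  · simp [minOnPB]
  · intro B hB hBne
    have hjB : j ∉ B := fun h => notMem_erase j A (mem_powerset.1 hB h)
    rw [minOnPB_insert_of_le (nonempty_iff_ne_empty.2 hBne)
      fun i hi => hj i (mem_of_mem_erase (mem_powerset.1 hB hi)), card_insert_of_notMem hjB,
      pow_succ]
    ring
  · simp

lemma mobius_eq (ψ : Finset (Fin n) → ℝ) (A : Finset (Fin n)) :
    mobius ψ A = (-1) ^ A.card * ∑ B ∈ A.powerset, (-1) ^ B.card * ψ B := by
  rw [mobius, mul_sum]
  refine sum_congr rfl fun B hB => ?_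
  rw [neg_one_pow_sub_of_le (card_le_card (mem_powerset.1 hB)), mul_assoc]

lemma sum_superset_mobius (ψ : Finset (Fin n) → ℝ) (B : Finset (Fin n)) :
    ∑ A ∈ univ.filter (B ⊆ ·), mobius ψ A = ∑ E ∈ B.powerset, (-1) ^ E.card * ψ Eᶜ := by
  have hswap : ∀ A C : Finset (Fin n),
      A ∈ univ.filter (B ⊆ ·) ∧ C ∈ A.powerset ↔ A ∈ univ.filter (B ∪ C ⊆ ·) ∧ C ∈ univ := by
    simp [union_subset_iff]
  calc ∑ A ∈ univ.filter (B ⊆ ·), mobius ψ A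
      = ∑ C, (∑ A ∈ univ.filter (B ∪ C ⊆ ·), (-1) ^ A.card) * ((-1) ^ C.card * ψ C) := by
        simp only [mobius_eq, mul_sum, sum_mul]
        exact sum_comm' hswap
    _ = ∑ C ∈ univ.filter (Bᶜ ⊆ ·), (-1) ^ Fintype.card (Fin n) * ((-1) ^ C.card * ψ C) := by
        simp only [sum_superset_neg_one_pow_card, union_eq_univ_iff_compl_subset, ite_mul,
          zero_mul, sum_ite, sum_const_zero, add_zero]
    _ = ∑ E ∈ B.powerset, (-1) ^ E.card * ψ Eᶜ := by
        rw [sum_superset_eq_sum_powerset_compl, compl_compl]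
        refine sum_congr rfl fun E _ => ?_
        rw [neg_one_pow_card_compl, ← mul_assoc, ← mul_assoc, ← pow_add, ← two_mul, pow_mul]
        norm_num

lemma mobius_compl (ψ : Finset (Fin n) → ℝ) (B : Finset (Fin n)) :
    mobius (fun E => ψ Eᶜ) B = (-1) ^ B.card * ∑ A ∈ univ.filter (B ⊆ ·), mobius ψ A := by
  rw [mobius_eq, sum_superset_mobius]

lemma mobius_dualPB (ψ : Finset (Fin n) → ℝ) {B : Finset (Fin n)} (hB : B.Nonempty) :
    mobius (dualPB ψ) B = -mobius (fun E => ψ Eᶜ) B := by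
  have hsign : ∑ E ∈ B.powerset, (-1 : ℝ) ^ E.card = 0 := by
    exact_mod_cast sum_powerset_neg_one_pow_card_of_nonempty hB
  simp only [mobius_eq, dualPB, mul_sub, sum_sub_distrib, ← sum_mul, hsign]
  ring

lemma mobius_empty (ψ : Finset (Fin n) → ℝ) : mobius ψ ∅ = ψ ∅ := by
  simp [mobius]

lemma sum_mobius_dualPB_mul_minOnPB (ψ : Finset (Fin n) → ℝ) (y : Fin n → ℝ) :
    ∑ B, mobius (dualPB ψ) B * minOnPB B y = -∑ A, mobius ψ A * minOnPB A (-y) := by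
  calc ∑ B, mobius (dualPB ψ) B * minOnPB B y
      = -∑ B, ∑ A ∈ univ.filter (B ⊆ ·), mobius ψ A * ((-1) ^ B.card * minOnPB B y) := by
        rw [← sum_neg_distrib]
        refine sum_congr rfl fun B _ => ?_
        rcases B.eq_empty_or_nonempty with rfl | hB
        · simp [minOnPB_empty]
        · rw [mobius_dualPB ψ hB, mobius_compl, ← sum_mul]
          ring
    _ = -∑ A, mobius ψ A * ∑ B ∈ A.powerset, (-1) ^ B.card * minOnPB B y := by
        simp only [mul_sum]
        rw [sum_comm' (t' := univ) (s' := powerset) (by simp)]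
    _ = -∑ A, mobius ψ A * minOnPB A (-y) := by
        simp only [sum_powerset_neg_one_pow_mul_minOnPB]

lemma Lov_dualPB (ψ : Finset (Fin n) → ℝ) (y : Fin n → ℝ) :
    Lov (dualPB ψ) y = 2 * ψ ∅ - Lov ψ (-y) := by
  simp only [Lov, mobius_empty, sum_mobius_dualPB_mul_minOnPB, dualPB, compl_empty]
  ring

lemma Lov_max_zero_add_Lov_min_zero (ψ : Finset (Fin n) → ℝ) (x : Fin n → ℝ) :
    Lov ψ (fun i => max (x i) 0) + Lov ψ (fun i => min (x i) 0) = ψ ∅ + Lov ψ x := by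
  have hpos (A : Finset (Fin n)) : minOnPB A (fun i => max (x i) 0) = max (minOnPB A x) 0 :=
    minOnPB_comp_of_monotone (fun _ _ h => max_le_max h le_rfl) (max_self 0) A x
  have hneg (A : Finset (Fin n)) : minOnPB A (fun i => min (x i) 0) = min (minOnPB A x) 0 :=
    minOnPB_comp_of_monotone (fun _ _ h => min_le_min h le_rfl) (min_self 0) A x
  simp only [Lov, mobius_empty]
  simp only [hpos, hneg, add_add_add_comm, ← sum_add_distrib, ← mul_add, max_add_min, add_zero]
  ring

end

/-- `L_ψ(x) = ψ(0) + L_ψ(x⁺) − L_{ψ^d}(x⁻)`. -/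
theorem stmt2 {n : ℕ} (ψ : Finset (Fin n) → ℝ) (x : Fin n → ℝ) :
    Lov ψ x = ψ ∅ + Lov ψ (fun i => max (x i) 0)
      - Lov (dualPB ψ) (fun i => max (-(x i)) 0) := by
  have hneg : (-fun i => max (-(x i)) 0) = fun i => min (x i) 0 := by
    ext i
    simpa using congrArg Neg.neg (max_neg_neg (x i) 0)
  rw [Lov_dualPB, hneg]
  linarith [Lov_max_zero_add_Lov_min_zero ψ x]
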